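/- arXiv:1609.09565 — 3 statements merged into one kernel-verified Lean document; each statement's English description precedes it below -/
import Mathlib

section
/- Let R be the 2^n × 2^n matrix indexed by states X, Y ∈ {0,1}^n with R_{X,Y} = 1 if X ⪯ Y and R_{X,Y} = 0 otherwise. Then R is invertible, every entry of R⁻¹SR is nonnegative, and in fact (R⁻¹SR)_{X,Z} = S_{¬Z, ¬X} for all X, Z ∈ {0,1}^n, where ¬X = 1̄ − X denotes the componentwise complement of X and S is the transition matrix of the SIS Markov chain. -/
open Matrix Finset

/-- Number of infected neighbors of node `i` in state `X`. -/
def numInf {n : ℕ} (G : SimpleGraph (Fin n)) [DecidableRel G.Adj]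
    (X : Fin n → Bool) (i : Fin n) : ℕ :=
  ((G.neighborFinset i).filter (fun j => X j = true)).card

/-- The `2^n × 2^n` transition matrix of the SIS Markov chain:
`S_{X,Y} = ∏_i P(Y_i | X)`, where `P(Y_i = 0 | X) = (1−β)^{m_i}` if `X_i = 0` and
`δ(1−β)^{m_i}` if `X_i = 1`. -/
noncomputable def sisTrans {n : ℕ} (G : SimpleGraph (Fin n)) [DecidableRel G.Adj]
    (β δ : ℝ) : Matrix (Fin n → Bool) (Fin n → Bool) ℝ :=
  Matrix.of fun X Y => ∏ i,
    if X i then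
      (if Y i then 1 - δ * (1 - β) ^ numInf G X i else δ * (1 - β) ^ numInf G X i)
    else
      (if Y i then 1 - (1 - β) ^ numInf G X i else (1 - β) ^ numInf G X i)

/-- The order-encoding matrix `R_{X,Y} = 1` if `X ⪯ Y` (entrywise) and `0` otherwise. -/
noncomputable def Rmat (n : ℕ) : Matrix (Fin n → Bool) (Fin n → Bool) ℝ :=
  Matrix.of fun X Y => if ∀ i, X i ≤ Y i then 1 else 0

lemma sum_prod_pi {n : ℕ} (f : Fin n → Bool → ℝ) :
    ∑ Y : Fin n → Bool, ∏ i, f i (Y i) = ∏ i, (f i false + f i true) := by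
  rw [← Fintype.piFinset_univ, ← Finset.prod_univ_sum]
  simp [add_comm]

noncomputable def Rinv (n : ℕ) : Matrix (Fin n → Bool) (Fin n → Bool) ℝ :=
  Matrix.of fun X Y => ∏ i,
    (if X i then (if Y i then (1:ℝ) else 0) else (if Y i then -1 else 1))

lemma Rmat_eq_prod {n : ℕ} (X Y : Fin n → Bool) :
    Rmat n X Y = ∏ i, (if X i ≤ Y i then (1:ℝ) else 0) := by
  unfold Rmat
  rw [Finset.prod_boole]
  simp

lemma Rmat_mul_Rinv {n : ℕ} : Rmat n * Rinv n = 1 := by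
  ext X Z
  simp only [Matrix.mul_apply, Rmat_eq_prod, Rinv, Matrix.of_apply]
  have step1 : (∑ Y : Fin n → Bool, (∏ i, (if X i ≤ Y i then (1:ℝ) else 0)) *
      ∏ i, (if Y i then (if Z i then (1:ℝ) else 0) else (if Z i then -1 else 1)))
      = ∑ Y : Fin n → Bool, ∏ i, (fun i (b : Bool) => (if X i ≤ b then (1:ℝ) else 0) *
        (if b then (if Z i then (1:ℝ) else 0) else (if Z i then -1 else 1))) i (Y i) :=
    Finset.sum_congr rfl fun Y _ => (Finset.prod_mul_distrib).symm
  rw [step1, sum_prod_pi (fun i (b : Bool) => (if X i ≤ b then (1:ℝ) else 0) *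
        (if b then (if Z i then (1:ℝ) else 0) else (if Z i then -1 else 1)))]
  trans (∏ i : Fin n, if X i = Z i then (1:ℝ) else 0)
  · exact Finset.prod_congr rfl fun i _ => by cases hx : X i <;> cases hz : Z i <;> simp [hx, hz]
  · rw [Finset.prod_boole]
    simp only [Matrix.one_apply]
    by_cases h : X = Z
    · simp [h]
    · simp only [h, if_false]
      rw [if_neg]
      simpa [funext_iff] using h

lemma Rinv_mul_Rmat {n : ℕ} : Rinv n * Rmat n = 1 := mul_eq_one_comm.mp Rmat_mul_Rinv

lemma isUnit_Rmat {n : ℕ} : IsUnit (Rmat n) :=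
  ⟨⟨Rmat n, Rinv n, Rmat_mul_Rinv, Rinv_mul_Rmat⟩, rfl⟩

noncomputable def ai {n : ℕ} (G : SimpleGraph (Fin n)) [DecidableRel G.Adj]
    (β δ : ℝ) (X : Fin n → Bool) (i : Fin n) : ℝ :=
  (if X i then δ else 1) * (1 - β) ^ numInf G X i

lemma sisTrans_eq {n : ℕ} (G : SimpleGraph (Fin n)) [DecidableRel G.Adj]
    (β δ : ℝ) (X Y : Fin n → Bool) :
    sisTrans G β δ X Y = ∏ i, (if Y i then 1 - ai G β δ X i else ai G β δ X i) := by
  simp only [sisTrans, Matrix.of_apply]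
  refine Finset.prod_congr rfl fun i _ => ?_
  cases hx : X i <;> cases hy : Y i <;> simp [hx, hy, ai]

lemma numInf_eq_sum {n : ℕ} (G : SimpleGraph (Fin n)) [DecidableRel G.Adj]
    (X : Fin n → Bool) (i : Fin n) :
    numInf G X i = ∑ j, if G.Adj i j ∧ X j = true then 1 else 0 := by
  unfold numInf
  rw [SimpleGraph.neighborFinset_eq_filter, Finset.filter_filter, Finset.card_filter]

lemma exp_count {n : ℕ} (G : SimpleGraph (Fin n)) [DecidableRel G.Adj]
    (X Z : Fin n → Bool) :
    ∑ i, (if Z i then 0 else numInf G X i)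
      = ∑ i, (if X i then numInf G (fun j => !Z j) i else 0) := by
  have hL : ∑ i, (if Z i then 0 else numInf G X i)
      = ∑ i, ∑ j, (if G.Adj i j ∧ X j = true ∧ Z i = false then 1 else 0) := by
    refine Finset.sum_congr rfl fun i _ => ?_
    rw [numInf_eq_sum]
    cases hz : Z i
    · simp only [if_false]
      exact Finset.sum_congr rfl fun j _ => by simp [hz, and_assoc]
    · simp [hz]
  have hR : ∑ i, (if X i then numInf G (fun j => !Z j) i else 0)
      = ∑ i, ∑ j, (if G.Adj i j ∧ X i = true ∧ Z j = false then 1 else 0) := by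
    refine Finset.sum_congr rfl fun i _ => ?_
    rw [numInf_eq_sum]
    cases hx : X i
    · simp [hx]
    · simp only [if_true]
      exact Finset.sum_congr rfl fun j _ => by
        cases hz : Z j <;> simp [hz, hx]
  rw [hL, hR, Finset.sum_comm]
  refine Finset.sum_congr rfl fun i _ => Finset.sum_congr rfl fun j _ => ?_
  refine if_congr ?_ rfl rfl
  rw [G.adj_comm]

lemma colsum {n : ℕ} (G : SimpleGraph (Fin n)) [DecidableRel G.Adj]
    (β δ : ℝ) (X Z : Fin n → Bool) :
    ∑ W : Fin n → Bool, sisTrans G β δ X W * Rmat n W Z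
      = ∏ i, (if Z i then 1 else ai G β δ X i) := by
  have step1 : ∑ W : Fin n → Bool, sisTrans G β δ X W * Rmat n W Z
      = ∑ W : Fin n → Bool, ∏ i, (fun i (b : Bool) =>
          (if b then 1 - ai G β δ X i else ai G β δ X i) *
          (if b ≤ Z i then (1:ℝ) else 0)) i (W i) := by
    refine Finset.sum_congr rfl fun W _ => ?_
    rw [sisTrans_eq, Rmat_eq_prod, ← Finset.prod_mul_distrib]
  rw [step1, sum_prod_pi (fun i (b : Bool) =>
          (if b then 1 - ai G β δ X i else ai G β δ X i) *
          (if b ≤ Z i then (1:ℝ) else 0))]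
  refine Finset.prod_congr rfl fun i _ => ?_
  cases hz : Z i <;> simp [hz]

lemma rowsum {n : ℕ} (G : SimpleGraph (Fin n)) [DecidableRel G.Adj]
    (β δ : ℝ) (X Z : Fin n → Bool) :
    ∑ Y : Fin n → Bool, Rmat n X Y * sisTrans G β δ (fun i => !Z i) (fun i => !Y i)
      = ∏ i, (if X i then ai G β δ (fun j => !Z j) i else 1) := by
  have step1 : ∑ Y : Fin n → Bool, Rmat n X Y * sisTrans G β δ (fun i => !Z i) (fun i => !Y i)
      = ∑ Y : Fin n → Bool, ∏ i, (fun i (b : Bool) =>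
          (if X i ≤ b then (1:ℝ) else 0) *
          (if !b then 1 - ai G β δ (fun j => !Z j) i else ai G β δ (fun j => !Z j) i)) i (Y i) := by
    refine Finset.sum_congr rfl fun Y _ => ?_
    rw [sisTrans_eq, Rmat_eq_prod, ← Finset.prod_mul_distrib]
  rw [step1, sum_prod_pi (fun i (b : Bool) =>
          (if X i ≤ b then (1:ℝ) else 0) *
          (if !b then 1 - ai G β δ (fun j => !Z j) i else ai G β δ (fun j => !Z j) i))]
  refine Finset.prod_congr rfl fun i _ => ?_
  cases hx : X i <;> simp [hx]

lemma prod_swap {n : ℕ} (G : SimpleGraph (Fin n)) [DecidableRel G.Adj]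
    (β δ : ℝ) (X Z : Fin n → Bool) :
    ∏ i, (if Z i then 1 else ai G β δ X i)
      = ∏ i, (if X i then ai G β δ (fun j => !Z j) i else 1) := by
  have hL : ∏ i, (if Z i then 1 else ai G β δ X i)
      = (∏ i, (if Z i then 1 else (if X i then δ else 1))) *
        (1 - β) ^ (∑ i, if Z i then 0 else numInf G X i) := by
    rw [← Finset.prod_pow_eq_pow_sum, ← Finset.prod_mul_distrib]
    refine Finset.prod_congr rfl fun i _ => ?_
    unfold ai
    cases hz : Z i <;> simp [hz]
  have hR : ∏ i, (if X i then ai G β δ (fun j => !Z j) i else 1)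
      = (∏ i, (if X i then (if !Z i then δ else 1) else 1)) *
        (1 - β) ^ (∑ i, if X i then numInf G (fun j => !Z j) i else 0) := by
    rw [← Finset.prod_pow_eq_pow_sum, ← Finset.prod_mul_distrib]
    refine Finset.prod_congr rfl fun i _ => ?_
    unfold ai
    cases hx : X i <;> simp [hx]
  rw [hL, hR, exp_count]
  congr 1
  refine Finset.prod_congr rfl fun i _ => ?_
  cases hz : Z i <;> cases hx : X i <;> simp [hz, hx]

lemma sisTrans_nonneg {n : ℕ} (G : SimpleGraph (Fin n)) [DecidableRel G.Adj]
    {β δ : ℝ} (hβ : β ∈ Set.Ioo (0 : ℝ) 1) (hδ : δ ∈ Set.Ioo (0 : ℝ) 1)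
    (X Y : Fin n → Bool) : 0 ≤ sisTrans G β δ X Y := by
  rw [sisTrans_eq]
  refine Finset.prod_nonneg fun i _ => ?_
  have h1 : (0:ℝ) ≤ (1 - β) ^ numInf G X i := pow_nonneg (by linarith [hβ.2]) _
  have h2 : (1 - β) ^ numInf G X i ≤ 1 := pow_le_one₀ (by linarith [hβ.2]) (by linarith [hβ.1])
  have h3 : 0 ≤ ai G β δ X i := by
    unfold ai
    refine mul_nonneg ?_ h1
    split <;> linarith [hδ.1]
  have h4 : ai G β δ X i ≤ 1 := by
    unfold ai
    refine mul_le_one₀ ?_ h1 h2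
    split <;> linarith [hδ.2]
  split <;> linarith

/-- `R` is invertible, every entry of `R⁻¹ S R` is nonnegative, and in fact
`(R⁻¹ S R)_{X,Z} = S_{¬Z, ¬X}` where `¬X` is the componentwise complement. -/
theorem stmt6 {n : ℕ} (hn : 1 ≤ n) (G : SimpleGraph (Fin n)) [DecidableRel G.Adj]
    (hG : G.Connected) (β δ : ℝ) (hβ : β ∈ Set.Ioo (0 : ℝ) 1) (hδ : δ ∈ Set.Ioo (0 : ℝ) 1) :
    IsUnit (Rmat n) ∧
    ∀ X Z : Fin n → Bool,
      ((Rmat n)⁻¹ * sisTrans G β δ * Rmat n) X Z =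
        sisTrans G β δ (fun i => ! Z i) (fun i => ! X i) ∧
      0 ≤ ((Rmat n)⁻¹ * sisTrans G β δ * Rmat n) X Z := by
  have hinv : (Rmat n)⁻¹ = Rinv n := Matrix.inv_eq_right_inv Rmat_mul_Rinv
  have hSR : sisTrans G β δ * Rmat n =
      Rmat n * Matrix.of (fun X Z => sisTrans G β δ (fun i => !Z i) (fun i => !X i)) := by
    ext X Z
    rw [Matrix.mul_apply, Matrix.mul_apply, colsum, prod_swap, ← rowsum]
    rfl
  have hfinal : (Rmat n)⁻¹ * sisTrans G β δ * Rmat n =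
      Matrix.of (fun X Z => sisTrans G β δ (fun i => !Z i) (fun i => !X i)) := by
    rw [Matrix.mul_assoc, hSR, ← Matrix.mul_assoc, hinv, Rinv_mul_Rmat, Matrix.one_mul]
  refine ⟨isUnit_Rmat, fun X Z => ?_⟩
  rw [hfinal]
  exact ⟨rfl, sisTrans_nonneg G hβ hδ _ _⟩
end

section
/- Let Ξ = (Ξ_1,…,Ξ_n) : [0,1]^n → [0,1]^n be twice continuously differentiable and satisfy conditions (a), (b), (c) [see context], define Φ̃ : [0,1]^n → [0,1]^n by Φ̃_i(x) = (1−δ)x_i + (1−x_i)Ξ_i(x), suppose λmax((1−δ)I_n + βA) > 1, and suppose x* is the unique fixed point of Φ̃ in [0,1]^n other than the origin. Then the Jacobian matrix of Φ̃ at x* has no real eigenvalue greater than or equal to 1. -/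
/-!
At a nonzero fixed point `x*`, connectivity and (b) force every coordinate of `x*` to be positive,
and (c) with `Ξ 0 = 0` makes each `Ξᵢ` concave along `[0, x*]`, so `DΞᵢ(x*) x* ≤ Ξᵢ(x*)`. With the
fixed-point equation `δ xᵢ = (1 - xᵢ) Ξᵢ(x*)` this gives `J x* < x*` componentwise. As `J` is
nonnegative off the diagonal, comparing an eigenvector with `x*` at the coordinate where
`|wᵢ| / xᵢ` is largest bounds every real eigenvalue of `J` strictly below `1`.
-/

open Matrix Finset

/-- The largest eigenvalue of a (symmetric) real matrix, as the supremum of its real spectrum. -/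
noncomputable def lamMax {n : ℕ} (M : Matrix (Fin n) (Fin n) ℝ) : ℝ :=
  sSup (spectrum ℝ M)

theorem SimpleGraph.Preconnected.forall_of_adj {V : Type*} {G : SimpleGraph V}
    (hG : G.Preconnected) {P : V → Prop} (hP : ∀ u v, G.Adj u v → P u → P v) {u : V}
    (hu : P u) (v : V) : P v := by
  induction (G.reachable_iff_reflTransGen u v).1 (hG u v) with
  | refl => exact hu
  | tail _ hadj ih => exact hP _ _ hadj ih

namespace Matrix

variable {ι : Type*} [Fintype ι]

theorem exists_mulVec_eq_smul_of_mem_spectrum {K : Type*} [Field K] [DecidableEq ι]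
    {A : Matrix ι ι K} {r : K} (hr : r ∈ spectrum K A) : ∃ w, w ≠ 0 ∧ A *ᵥ w = r • w := by
  rw [← spectrum_toLin', ← Module.End.hasEigenvalue_iff_mem_spectrum] at hr
  obtain ⟨w, hw⟩ := hr.exists_hasEigenvector
  exact ⟨w, hw.2, by simpa [toLin'_apply] using hw.apply_eq_smul⟩

theorem abs_lt_of_mulVec_eq_smul_of_nonneg {N : Matrix ι ι ℝ} (hN : ∀ i j, 0 ≤ N i j)
    {x : ι → ℝ} (hx : ∀ i, 0 < x i) {s : ℝ} (hNx : ∀ i, (N *ᵥ x) i < s * x i)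
    {w : ι → ℝ} (hw : w ≠ 0) {μ : ℝ} (hNw : N *ᵥ w = μ • w) : |μ| < s := by
  obtain ⟨k, hk⟩ := Function.ne_iff.mp hw
  obtain ⟨i, -, hmax⟩ := exists_max_image univ (fun i => |w i| / x i) ⟨k, mem_univ k⟩
  set t := |w i| / x i
  have hwt : ∀ j, |w j| ≤ t * x j := fun j =>
    (div_le_iff₀ (hx j)).1 (hmax j (mem_univ j))
  have ht : 0 < t := (div_pos (abs_pos.2 hk) (hx k)).trans_le (hmax k (mem_univ k))
  have hwi : |w i| = t * x i := (div_mul_cancel₀ _ (hx i).ne').symm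
  have key : |μ| * (t * x i) < s * (t * x i) := calc
    |μ| * (t * x i) = |(N *ᵥ w) i| := by rw [hNw, Pi.smul_apply, smul_eq_mul, abs_mul, hwi]
    _ ≤ ∑ j, N i j * |w j| := by
      simp only [mulVec, dotProduct]
      refine (abs_sum_le_sum_abs _ _).trans_eq (sum_congr rfl fun j _ => ?_)
      rw [abs_mul, abs_of_nonneg (hN i j)]
    _ ≤ ∑ j, N i j * (t * x j) :=
      sum_le_sum fun j _ => mul_le_mul_of_nonneg_left (hwt j) (hN i j)
    _ = t * (N *ᵥ x) i := by
      simp only [mulVec, dotProduct, mul_sum]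
      exact sum_congr rfl fun j _ => by ring
    _ < t * (s * x i) := mul_lt_mul_of_pos_left (hNx i) ht
    _ = s * (t * x i) := by ring
  exact lt_of_mul_lt_mul_right key (mul_pos ht (hx i)).le

theorem lt_of_mem_spectrum_of_mulVec_lt [DecidableEq ι] {M : Matrix ι ι ℝ}
    (hM : ∀ i j, i ≠ j → 0 ≤ M i j) {x : ι → ℝ} (hx : ∀ i, 0 < x i) {s : ℝ}
    (hMx : ∀ i, (M *ᵥ x) i < s * x i) {r : ℝ} (hr : r ∈ spectrum ℝ M) : r < s := by
  obtain ⟨w, hw, hMw⟩ := exists_mulVec_eq_smul_of_mem_spectrum hr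
  set c := ∑ i, |M i i|
  have hN : ∀ i j, 0 ≤ (M + c • 1) i j := by
    intro i j
    rcases eq_or_ne i j with rfl | hij
    · have := single_le_sum (fun j _ => abs_nonneg (M j j)) (mem_univ i)
      simp only [add_apply, smul_apply, one_apply_eq, smul_eq_mul, mul_one]
      linarith [neg_abs_le (M i i)]
    · simpa [one_apply_ne hij] using hM i j hij
  have hshift : ∀ v, (M + c • 1) *ᵥ v = M *ᵥ v + c • v := fun v => by
    rw [add_mulVec, smul_mulVec, one_mulVec]
  have hNx : ∀ i, ((M + c • 1) *ᵥ x) i < (s + c) * x i := fun i => by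
    simp only [hshift, Pi.add_apply, Pi.smul_apply, smul_eq_mul]
    linarith [hMx i]
  have hNw : (M + c • 1) *ᵥ w = (r + c) • w := by rw [hshift, hMw, add_smul]
  linarith [le_abs_self (r + c), abs_lt_of_mulVec_eq_smul_of_nonneg hN hx hNx hw hNw]

end Matrix

section Calculus

theorem fderiv_fderiv_apply {E F : Type*} [NormedAddCommGroup E] [NormedSpace ℝ E]
    [NormedAddCommGroup F] [NormedSpace ℝ F] {f : E → F} {y : E}
    (hf : DifferentiableAt ℝ (fderiv ℝ f) y) (v w : E) :
    fderiv ℝ (fun z => fderiv ℝ f z w) y v = fderiv ℝ (fderiv ℝ f) y v w := by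
  simp [fderiv_clm_apply hf (differentiableAt_const w)]

variable {ι : Type*} [Fintype ι]

theorem fderiv_sis_component_apply {g : (ι → ℝ) → ℝ} {x : ι → ℝ} (hg : DifferentiableAt ℝ g x)
    (δ : ℝ) (i : ι) (v : ι → ℝ) :
    fderiv ℝ (fun y => (1 - δ) * y i + (1 - y i) * g y) x v
      = (1 - δ) * v i - v i * g x + (1 - x i) * fderiv ℝ g x v := by
  have hproj : HasFDerivAt (fun y : ι → ℝ => y i) (ContinuousLinearMap.proj (R := ℝ) i) x :=
    hasFDerivAt_apply i x
  rw [((hproj.const_mul (1 - δ)).fun_add (((hasFDerivAt_const 1 x).fun_sub hproj).fun_mul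
    hg.hasFDerivAt)).fderiv]
  simp only [zero_sub, smul_neg, _root_.add_apply, _root_.smul_apply, _root_.neg_apply,
    ContinuousLinearMap.proj_apply, smul_eq_mul]
  ring

variable [DecidableEq ι]

theorem ContinuousLinearMap.apply_eq_sum_mul_single (L : (ι → ℝ) →L[ℝ] ℝ) (x : ι → ℝ) :
    L x = ∑ j, x j * L (Pi.single j 1) := by
  conv_lhs => rw [pi_eq_sum_univ' x]
  simp only [map_sum, _root_.map_smul, smul_eq_mul]

theorem Matrix.mulVec_apply_eq_of_apply_single {J : Matrix ι ι ℝ}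
    {L : ι → (ι → ℝ) →L[ℝ] ℝ} (hJ : ∀ i j, J i j = L i (Pi.single j 1)) (v : ι → ℝ) (i : ι) :
    (J *ᵥ v) i = L i v := by
  simp only [mulVec, dotProduct, hJ, (L i).apply_eq_sum_mul_single v, mul_comm]

theorem ContinuousLinearMap.apply_apply_nonpos_of_single
    (D : (ι → ℝ) →L[ℝ] (ι → ℝ) →L[ℝ] ℝ) (hD : ∀ j k, D (Pi.single j 1) (Pi.single k 1) ≤ 0)
    {v w : ι → ℝ} (hv : 0 ≤ v) (hw : 0 ≤ w) : D v w ≤ 0 := by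
  rw [← flip_apply, apply_eq_sum_mul_single]
  refine sum_nonpos fun j _ => mul_nonpos_of_nonneg_of_nonpos (hv j) ?_
  rw [flip_apply, apply_eq_sum_mul_single]
  exact sum_nonpos fun k _ => mul_nonpos_of_nonneg_of_nonpos (hw k) (hD j k)

theorem sub_pos_of_fderiv_single_nonneg {f : (ι → ℝ) → ℝ} (hf : Differentiable ℝ f)
    {s : Set (ι → ℝ)} (hs : Convex ℝ s) (h0 : 0 ∈ s) {x : ι → ℝ} (hx : x ∈ s) (hx0 : 0 ≤ x)
    (hf' : ∀ y ∈ s, ∀ j, 0 ≤ fderiv ℝ f y (Pi.single j 1)) {k : ι} (hk : 0 < x k)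
    (hfk : ∀ y ∈ s, 0 < fderiv ℝ f y (Pi.single k 1)) : 0 < f x - f 0 := by
  obtain ⟨z, hz, hmvt⟩ := domain_mvt (fun y _ => (hf y).hasFDerivAt.hasFDerivWithinAt) hs h0 hx
  have hzs : z ∈ s := hs.segment_subset h0 hx hz
  rw [hmvt, sub_zero, ContinuousLinearMap.apply_eq_sum_mul_single]
  exact sum_pos' (fun j _ => mul_nonneg (hx0 j) (hf' z hzs j))
    ⟨k, mem_univ k, mul_pos hk (hfk z hzs)⟩

theorem fderiv_apply_le_sub_of_fderiv_fderiv_nonpos {f : (ι → ℝ) → ℝ} (hf : ContDiff ℝ 2 f)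
    {s : Set (ι → ℝ)} (hs : Convex ℝ s) (h0 : 0 ∈ s) {x : ι → ℝ} (hx : x ∈ s) (hx0 : 0 ≤ x)
    (hf'' : ∀ y ∈ s, ∀ j k,
      fderiv ℝ (fun z => fderiv ℝ f z (Pi.single k 1)) y (Pi.single j 1) ≤ 0) :
    fderiv ℝ f x x ≤ f x - f 0 := by
  -- `f x - f 0 = Df(z) x` for some `z ∈ [0, x]`, and `y ↦ Df(y) x` decreases from `z` to `x`
  have hDf : Differentiable ℝ (fderiv ℝ f) :=
    (hf.fderiv_right (m := 1) (by norm_num)).differentiable (by norm_num)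
  obtain ⟨z, hz, hmvt⟩ := domain_mvt
    (fun y _ => (hf.differentiable (by norm_num) y).hasFDerivAt.hasFDerivWithinAt) hs h0 hx
  have hzs : z ∈ s := hs.segment_subset h0 hx hz
  have hxz : 0 ≤ x - z := by
    obtain ⟨a, b, ha, -, hab, rfl⟩ := hz
    intro j
    simp only [Pi.zero_apply, Pi.sub_apply, Pi.add_apply, Pi.smul_apply, smul_eq_mul]
    nlinarith [mul_nonneg ha (hx0 j), congrArg (· * x j) hab]
  obtain ⟨w, hw, hmvt'⟩ := domain_mvt (f := fun y => fderiv ℝ f y x)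
    (fun y _ => ((hDf y).clm_apply (differentiableAt_const x)).hasFDerivAt.hasFDerivWithinAt)
    hs hzs hx
  have hws : w ∈ s := hs.segment_subset hzs hx hw
  have hconc : fderiv ℝ (fderiv ℝ f) w (x - z) x ≤ 0 :=
    ContinuousLinearMap.apply_apply_nonpos_of_single _
      (fun j k => fderiv_fderiv_apply (hDf w) _ _ ▸ hf'' w hws j k) hxz hx0
  rw [fderiv_fderiv_apply (hDf w)] at hmvt'
  rw [hmvt, sub_zero]
  linarith

theorem pos_of_sis_fixedPoint {G : SimpleGraph ι} (hG : G.Preconnected)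
    {Ξ : (ι → ℝ) → ι → ℝ} (hΞ : ∀ i, Differentiable ℝ (fun y => Ξ y i)) (hΞ0 : Ξ 0 = 0)
    (hpos : ∀ y ∈ Set.Icc (0 : ι → ℝ) 1, ∀ i j, G.Adj j i →
      0 < fderiv ℝ (fun y => Ξ y i) y (Pi.single j 1))
    (hnonneg : ∀ y ∈ Set.Icc (0 : ι → ℝ) 1, ∀ i j,
      0 ≤ fderiv ℝ (fun y => Ξ y i) y (Pi.single j 1))
    {δ : ℝ} {x : ι → ℝ} (hx : x ∈ Set.Icc (0 : ι → ℝ) 1) (hx_ne : x ≠ 0)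
    (hfix : ∀ i, δ * x i = (1 - x i) * Ξ x i) (i : ι) : 0 < x i := by
  have hx0 : ∀ i, 0 ≤ x i := hx.1
  obtain ⟨i₀, hi₀⟩ := Function.ne_iff.mp hx_ne
  refine hG.forall_of_adj (P := fun i => 0 < x i) (fun a b hab ha => ?_) ((hx0 i₀).lt_of_ne' hi₀) i
  have hΞb := sub_pos_of_fderiv_single_nonneg (hΞ b) (convex_Icc 0 1)
    ⟨le_rfl, zero_le_one⟩ hx hx0 (fun y hy j => hnonneg y hy b j) ha
    (fun y hy => hpos y hy b a hab)
  rw [hΞ0, Pi.zero_apply, sub_zero] at hΞb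
  refine (hx0 b).lt_of_ne' fun hb => ?_
  linarith [hb ▸ hfix b]

end Calculus

theorem stmt11_general {n : ℕ} (G : SimpleGraph (Fin n))
    (hG : G.Connected) (δ : ℝ) (hδ : δ ∈ Set.Ioo (0 : ℝ) 1)
    (Ξ : (Fin n → ℝ) → Fin n → ℝ)
    (hC2 : ContDiff ℝ 2 Ξ)
    -- (a)
    (ha0 : Ξ 0 = 0)
    -- (b)
    (hb_pos : ∀ x ∈ Set.Icc (0 : Fin n → ℝ) 1, ∀ i j, G.Adj j i →
      0 < fderiv ℝ (fun y => Ξ y i) x (Pi.single j 1))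
    (hb_zero : ∀ x ∈ Set.Icc (0 : Fin n → ℝ) 1, ∀ i j, ¬ G.Adj j i →
      fderiv ℝ (fun y => Ξ y i) x (Pi.single j 1) = 0)
    -- (c)
    (hc : ∀ x ∈ Set.Icc (0 : Fin n → ℝ) 1, ∀ i j k,
      fderiv ℝ (fun y => fderiv ℝ (fun z => Ξ z i) y (Pi.single k 1)) x (Pi.single j 1) ≤ 0)
    (phiT : (Fin n → ℝ) → Fin n → ℝ)
    (hphiT : ∀ x i, phiT x i = (1 - δ) * x i + (1 - x i) * Ξ x i)
    (xstar : Fin n → ℝ)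
    (hx_mem : xstar ∈ Set.Icc (0 : Fin n → ℝ) 1) (hx_ne : xstar ≠ 0)
    (hx_fix : phiT xstar = xstar)
    (J : Matrix (Fin n) (Fin n) ℝ)
    (hJ : ∀ i j, J i j = fderiv ℝ (fun y => phiT y i) xstar (Pi.single j 1)) :
    ∀ r : ℝ, r ∈ spectrum ℝ J → r < 1 := by
  have hΞ : ∀ i, ContDiff ℝ 2 (fun y => Ξ y i) := contDiff_pi.mp hC2
  have hx1 : ∀ i, 0 ≤ 1 - xstar i := fun i => sub_nonneg.2 (hx_mem.2 i)
  have hfix : ∀ i, δ * xstar i = (1 - xstar i) * Ξ xstar i := fun i => by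
    linarith [hphiT xstar i, congrFun hx_fix i]
  have hΞ' : ∀ y ∈ Set.Icc (0 : Fin n → ℝ) 1, ∀ i j,
      0 ≤ fderiv ℝ (fun y => Ξ y i) y (Pi.single j 1) := fun y hy i j => by
    by_cases h : G.Adj j i
    · exact (hb_pos y hy i j h).le
    · exact (hb_zero y hy i j h).ge
  have hx_pos : ∀ i, 0 < xstar i :=
    pos_of_sis_fixedPoint hG.preconnected (fun i => (hΞ i).differentiable (by norm_num)) ha0
      hb_pos hΞ' hx_mem hx_ne hfix
  have hΞ_pos : ∀ i, 0 < Ξ xstar i := fun i =>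
    pos_of_mul_pos_right (hfix i ▸ mul_pos hδ.1 (hx_pos i)) (hx1 i)
  have hJ_apply : ∀ i v, (J *ᵥ v) i
      = (1 - δ) * v i - v i * Ξ xstar i + (1 - xstar i) * fderiv ℝ (fun y => Ξ y i) xstar v := by
    intro i v
    rw [mulVec_apply_eq_of_apply_single hJ, funext fun y => hphiT y i]
    exact fderiv_sis_component_apply ((hΞ i).differentiable (by norm_num) _) δ i v
  intro r hr
  refine lt_of_mem_spectrum_of_mulVec_lt (fun i j hij => ?_) hx_pos (fun i => ?_) hr
  · have hJij := hJ_apply i (Pi.single j 1)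
    simp only [mulVec_single_one, col_apply, Pi.single_eq_of_ne hij, mul_zero,
      zero_mul, sub_zero, zero_add] at hJij
    exact hJij ▸ mul_nonneg (hx1 i) (hΞ' xstar hx_mem i j)
  · have hconc := fderiv_apply_le_sub_of_fderiv_fderiv_nonpos (hΞ i) (convex_Icc 0 1)
      ⟨le_rfl, zero_le_one⟩ hx_mem hx_mem.1 (hc · · i)
    rw [ha0, Pi.zero_apply, sub_zero] at hconc
    rw [hJ_apply, one_mul]
    linarith [hfix i, mul_pos (hx_pos i) (hΞ_pos i), mul_le_mul_of_nonneg_left hconc (hx1 i)]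

/-- Let `Ξ` satisfy conditions (a)–(c), let
`Φ̃_i(x) = (1−δ)x_i + (1−x_i)Ξ_i(x)`, suppose `λmax((1−δ)I + βA) > 1` and that `x*` is the
unique fixed point of `Φ̃` in `[0,1]^n` other than the origin. Then the Jacobian of `Φ̃` at
`x*` has no real eigenvalue `≥ 1`. -/
theorem stmt11 {n : ℕ} (hn : 1 ≤ n) (G : SimpleGraph (Fin n)) [DecidableRel G.Adj]
    (hG : G.Connected) (β δ : ℝ) (hβ : β ∈ Set.Ioo (0 : ℝ) 1) (hδ : δ ∈ Set.Ioo (0 : ℝ) 1)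
    (Ξ : (Fin n → ℝ) → Fin n → ℝ)
    (hmap : ∀ x ∈ Set.Icc (0 : Fin n → ℝ) 1, Ξ x ∈ Set.Icc (0 : Fin n → ℝ) 1)
    (hC2 : ContDiff ℝ 2 Ξ)
    -- (a)
    (ha0 : Ξ 0 = 0)
    (ha1 : ∀ i j, fderiv ℝ (fun y => Ξ y i) 0 (Pi.single j 1) = β * G.adjMatrix ℝ i j)
    -- (b)
    (hb_pos : ∀ x ∈ Set.Icc (0 : Fin n → ℝ) 1, ∀ i j, G.Adj j i →
      0 < fderiv ℝ (fun y => Ξ y i) x (Pi.single j 1))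
    (hb_zero : ∀ x ∈ Set.Icc (0 : Fin n → ℝ) 1, ∀ i j, ¬ G.Adj j i →
      fderiv ℝ (fun y => Ξ y i) x (Pi.single j 1) = 0)
    -- (c)
    (hc : ∀ x ∈ Set.Icc (0 : Fin n → ℝ) 1, ∀ i j k,
      fderiv ℝ (fun y => fderiv ℝ (fun z => Ξ z i) y (Pi.single k 1)) x (Pi.single j 1) ≤ 0)
    (phiT : (Fin n → ℝ) → Fin n → ℝ)
    (hphiT : ∀ x i, phiT x i = (1 - δ) * x i + (1 - x i) * Ξ x i)
    (hthr : 1 < lamMax ((1 - δ) • (1 : Matrix (Fin n) (Fin n) ℝ) + β • G.adjMatrix ℝ))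
    (xstar : Fin n → ℝ)
    (hx_mem : xstar ∈ Set.Icc (0 : Fin n → ℝ) 1) (hx_ne : xstar ≠ 0)
    (hx_fix : phiT xstar = xstar)
    (hx_uniq : ∀ y ∈ Set.Icc (0 : Fin n → ℝ) 1, y ≠ 0 → phiT y = y → y = xstar)
    (J : Matrix (Fin n) (Fin n) ℝ)
    (hJ : ∀ i j, J i j = fderiv ℝ (fun y => phiT y i) xstar (Pi.single j 1)) :
    ∀ r : ℝ, r ∈ spectrum ℝ J → r < 1 :=
  stmt11_general G hG δ hδ Ξ hC2 ha0 hb_pos hb_zero hc phiT hphiT xstar hx_mem hx_ne hx_fix J hJ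
end

section
/- Consider the SIRS nonlinear map F on D = {(P_R, P_I) ∈ [0,1]^n × [0,1]^n : P_R + P_I ⪯ 1_n} and the linear map (P_R, P_I) ↦ M·(P_R, P_I) with M the block matrix [[(1−γ)I_n, δI_n], [0_{n×n}, (1−δ)I_n + βA]]. If βλmax(A)/δ < 1, then the origin (P_R, P_I) = (0_n, 0_n) is a globally stable fixed point of both maps: for every initial point in D (respectively in ℝ^{2n} for the linear map) the iterates converge to the origin. -/
/-!
Only the infected coordinates drive the dynamics: the recovered part contracts by `1 - γ` and is
fed by `δ P_I`, so it dies out once `P_I` does. Under the linear map `P_I` evolves by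
`B = (1 - δ) I + β A`. Since `A` is symmetric with nonnegative entries,
`|xᵀ A x| ≤ |x|ᵀ A |x| ≤ λmax(A) ‖x‖²`, so every eigenvalue of the symmetric matrix `B` has modulus
at most `1 - δ + β λmax(A) < 1` and `Bᵗ → 0`. Under the nonlinear map, the Weierstrass product
inequality `1 - ∏ (1 - a_j) ≤ ∑ a_j` bounds the new `P_I` on the invariant domain `D` by the linear
one; the linear map is monotone, so `P_I(t)` is squeezed between `0` and `Bᵗ P_I(0)`.
-/

open Matrix Finset

/-- The domain `D = {(P_R, P_I) ∈ [0,1]^n × [0,1]^n : P_R + P_I ⪯ 1}`. -/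
def sirsD (n : ℕ) : Set ((Fin n → ℝ) × (Fin n → ℝ)) :=
  {p | p.1 ∈ Set.Icc (0 : Fin n → ℝ) 1 ∧ p.2 ∈ Set.Icc (0 : Fin n → ℝ) 1 ∧
    ∀ i, p.1 i + p.2 i ≤ 1}

/-- The SIRS nonlinear (mean-field) map `F(P_R, P_I)`:
`P_R,i′ = (1−γ)P_R,i + δ P_I,i` and
`P_I,i′ = (1−δ)P_I,i + (1 − ∏_{j∈N_i}(1−β P_I,j))(1 − P_R,i − P_I,i)`. -/
noncomputable def sirsF {n : ℕ} (G : SimpleGraph (Fin n)) [DecidableRel G.Adj]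
    (β δ γ : ℝ) (p : (Fin n → ℝ) × (Fin n → ℝ)) : (Fin n → ℝ) × (Fin n → ℝ) :=
  (fun i => (1 - γ) * p.1 i + δ * p.2 i,
   fun i => (1 - δ) * p.2 i +
     (1 - ∏ j ∈ G.neighborFinset i, (1 - β * p.2 j)) * (1 - p.1 i - p.2 i))

/-- The SIRS linear map `(P_R, P_I) ↦ M (P_R, P_I)` with
`M = [[(1−γ)I, δI], [0, (1−δ)I + βA]]`. -/
noncomputable def sirsL {n : ℕ} (G : SimpleGraph (Fin n)) [DecidableRel G.Adj]
    (β δ γ : ℝ) (p : (Fin n → ℝ) × (Fin n → ℝ)) : (Fin n → ℝ) × (Fin n → ℝ) :=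
  (fun i => (1 - γ) * p.1 i + δ * p.2 i,
   fun i => (1 - δ) * p.2 i + β * ((G.adjMatrix ℝ) *ᵥ p.2) i)

open Filter Topology

theorem one_sub_sum_le_prod_one_sub {ι : Type*} (s : Finset ι) {a : ι → ℝ}
    (ha : ∀ i ∈ s, a i ∈ Set.Icc 0 1) : 1 - ∑ i ∈ s, a i ≤ ∏ i ∈ s, (1 - a i) := by
  classical
  induction s using Finset.induction with
  | empty => simp
  | insert x s hx ih =>
    rw [prod_insert hx, sum_insert hx]
    obtain ⟨hx0, hx1⟩ := ha x (mem_insert_self x s)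
    have hs : 0 ≤ ∑ i ∈ s, a i := sum_nonneg fun i hi => (ha i (mem_insert_of_mem hi)).1
    have ih := ih fun i hi => ha i (mem_insert_of_mem hi)
    nlinarith [mul_le_mul_of_nonneg_left ih (sub_nonneg.2 hx1)]

theorem prod_one_sub_mem_Icc {ι : Type*} (s : Finset ι) {a : ι → ℝ}
    (ha : ∀ i ∈ s, a i ∈ Set.Icc 0 1) : ∏ i ∈ s, (1 - a i) ∈ Set.Icc 0 1 :=
  ⟨prod_nonneg fun i hi => sub_nonneg.2 (ha i hi).2,
    prod_le_one (fun i hi => sub_nonneg.2 (ha i hi).2) fun i hi => sub_le_self _ (ha i hi).1⟩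

theorem tendsto_zero_of_norm_le_mul_add {E : Type*} [SeminormedAddCommGroup E] {x : ℕ → E}
    {u : ℕ → ℝ} {r : ℝ} (hr0 : 0 ≤ r) (hr1 : r < 1) (hx : ∀ t, ‖x (t + 1)‖ ≤ r * ‖x t‖ + u t)
    (hu : Tendsto u atTop (𝓝 0)) : Tendsto x atTop (𝓝 0) := by
  rw [tendsto_zero_iff_norm_tendsto_zero, Metric.tendsto_atTop]
  intro ε hε
  obtain ⟨T, hT⟩ := eventually_atTop.1 <| (tendsto_order.1 hu).2 ((1 - r) * (ε / 2)) (by nlinarith)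
  -- from time `T` on, the excess of `‖x‖` over `ε / 2` contracts by the factor `r`
  set d : ℕ → ℝ := fun k => max (‖x (T + k)‖ - ε / 2) 0
  have hd (k : ℕ) : d k ≤ r ^ k * d 0 := le_geom hr0 k fun k _ => by
    have := hx (T + k)
    have := hT (T + k) (by omega)
    simp only [d, ← add_assoc]
    refine max_le ?_ (mul_nonneg hr0 (le_max_right _ _))
    nlinarith [le_max_left (‖x (T + k)‖ - ε / 2) 0]
  have hpow : Tendsto (fun k => r ^ k * d 0) atTop (𝓝 0) := by
    simpa using (tendsto_pow_atTop_nhds_zero_of_lt_one hr0 hr1).mul_const (d 0)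
  obtain ⟨K, hK⟩ := eventually_atTop.1 <| (tendsto_order.1 hpow).2 (ε / 2) (by positivity)
  refine ⟨T + K, fun t ht => ?_⟩
  obtain ⟨k, rfl⟩ := Nat.exists_eq_add_of_le (le_trans (Nat.le_add_right T K) ht)
  have := (hd k).trans_lt (hK k (by omega))
  rw [Real.dist_eq, sub_zero, abs_norm]
  linarith [le_max_left (‖x (T + k)‖ - ε / 2) 0]

theorem tendsto_iterate_of_fst_eq {𝕜 E : Type*} [NormedField 𝕜] [SeminormedAddCommGroup E]
    [NormedSpace 𝕜 E] {f : E × E → E × E} {a b : 𝕜} (ha : ‖a‖ < 1)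
    (hf : ∀ q, (f q).1 = a • q.1 + b • q.2) {p : E × E}
    (hsnd : Tendsto (fun t => (f^[t] p).2) atTop (𝓝 0)) :
    Tendsto (fun t => f^[t] p) atTop (𝓝 0) := by
  refine Tendsto.prodMk_nhds ?_ hsnd
  refine tendsto_zero_of_norm_le_mul_add (norm_nonneg a) ha (u := fun t => ‖b‖ * ‖(f^[t] p).2‖)
    (fun t => ?_) (by simpa using (tendsto_norm_zero.comp hsnd).const_mul ‖b‖)
  rw [Function.iterate_succ_apply', hf, ← norm_smul, ← norm_smul]
  exact norm_add_le _ _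

namespace Matrix

variable {ι : Type*} [Fintype ι] [DecidableEq ι]

theorem IsHermitian.tendsto_pow_atTop_nhds_zero {𝕜 : Type*} [RCLike 𝕜] {A : Matrix ι ι 𝕜}
    (hA : A.IsHermitian) (h : ∀ i, |hA.eigenvalues i| < 1) :
    Tendsto (A ^ ·) atTop (𝓝 0) := by
  set U : Matrix ι ι 𝕜 := (hA.eigenvectorUnitary : Matrix ι ι 𝕜)
  have hpow (t : ℕ) : A ^ t = U * diagonal (fun i => (hA.eigenvalues i : 𝕜) ^ t) * star U := by
    conv_lhs => rw [hA.spectral_theorem]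
    rw [← map_pow, diagonal_pow, Unitary.conjStarAlgAut_apply]
    rfl
  have hdiag : Tendsto (fun t : ℕ => diagonal (fun i => (hA.eigenvalues i : 𝕜) ^ t)) atTop
      (𝓝 (diagonal 0)) :=
    (continuous_id.matrix_diagonal).tendsto _ |>.comp <| tendsto_pi_nhds.2 fun i => by
      simpa using tendsto_pow_atTop_nhds_zero_of_norm_lt_one (by simpa using h i)
  have hconj : Continuous fun M : Matrix ι ι 𝕜 => U * M * star U := by fun_prop
  have hlim := (hconj.tendsto _).comp hdiag
  rw [show diagonal (0 : ι → 𝕜) = 0 from diagonal_zero, mul_zero, zero_mul] at hlim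
  exact hlim.congr fun t => (hpow t).symm

theorem IsHermitian.abs_eigenvalues_le {B : Matrix ι ι ℝ} (hB : B.IsHermitian) {ρ : ℝ}
    (h : ∀ x, |x ⬝ᵥ B *ᵥ x| ≤ ρ * (x ⬝ᵥ x)) (i : ι) : |hB.eigenvalues i| ≤ ρ := by
  set v : ι → ℝ := ⇑(hB.eigenvectorBasis i)
  have hv : v ⬝ᵥ v = 1 := by
    have := real_inner_self_eq_norm_sq (hB.eigenvectorBasis i)
    rw [hB.eigenvectorBasis.orthonormal.1 i, EuclideanSpace.inner_eq_star_dotProduct] at this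
    simpa [v, dotProduct_comm] using this
  simpa [hB.eigenvalues_eq, hv] using h v

open scoped MatrixOrder in
theorem IsHermitian.dotProduct_mulVec_le_of_spectrum_le {A : Matrix ι ι ℝ} (hA : A.IsHermitian)
    {r : ℝ} (h : ∀ μ ∈ spectrum ℝ A, μ ≤ r) (x : ι → ℝ) : x ⬝ᵥ A *ᵥ x ≤ r * (x ⬝ᵥ x) := by
  have hle : A ≤ algebraMap ℝ _ r := le_algebraMap_of_spectrum_le h hA.isSelfAdjoint
  simpa [sub_mulVec, dotProduct_sub, Algebra.algebraMap_eq_smul_one, smul_mulVec] using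
    (le_iff.mp hle).dotProduct_mulVec_nonneg x

omit [DecidableEq ι] in
theorem abs_dotProduct_mulVec_le_of_nonneg {A : Matrix ι ι ℝ} (hA : ∀ i j, 0 ≤ A i j)
    (x : ι → ℝ) : |x ⬝ᵥ A *ᵥ x| ≤ |x| ⬝ᵥ A *ᵥ |x| := by
  calc |x ⬝ᵥ A *ᵥ x| = |∑ i, ∑ j, x i * A i j * x j| := by
        simp only [dotProduct, mulVec, mul_sum, mul_assoc]
    _ ≤ ∑ i, ∑ j, |x i * A i j * x j| :=
        (abs_sum_le_sum_abs _ _).trans (sum_le_sum fun i _ => abs_sum_le_sum_abs _ _)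
    _ = |x| ⬝ᵥ A *ᵥ |x| := by
        simp only [dotProduct, mulVec, mul_sum, abs_mul, abs_of_nonneg (hA _ _), mul_assoc,
          Pi.abs_apply]

end Matrix

theorem abs_dotProduct_mulVec_le_lamMax {n : ℕ} {A : Matrix (Fin n) (Fin n) ℝ}
    (hA : A.IsHermitian) (hA0 : ∀ i j, 0 ≤ A i j) (x : Fin n → ℝ) :
    |x ⬝ᵥ A *ᵥ x| ≤ lamMax A * (x ⬝ᵥ x) := by
  have hspec : ∀ μ ∈ spectrum ℝ A, μ ≤ lamMax A := fun μ hμ =>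
    le_csSup A.finite_real_spectrum.bddAbove hμ
  have habs : |x| ⬝ᵥ |x| = x ⬝ᵥ x := by
    simp only [dotProduct, Pi.abs_apply, abs_mul_abs_self]
  calc |x ⬝ᵥ A *ᵥ x| ≤ |x| ⬝ᵥ A *ᵥ |x| := abs_dotProduct_mulVec_le_of_nonneg hA0 x
    _ ≤ lamMax A * (x ⬝ᵥ x) := habs ▸ hA.dotProduct_mulVec_le_of_spectrum_le hspec |x|

section SIRS

variable {n : ℕ} (G : SimpleGraph (Fin n)) [DecidableRel G.Adj] {β δ γ : ℝ}

/-- The lower right block of the matrix `M` of the linear SIRS map. -/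
noncomputable def sirsInfectedBlock (β δ : ℝ) : Matrix (Fin n) (Fin n) ℝ :=
  (1 - δ) • 1 + β • G.adjMatrix ℝ

theorem sirsInfectedBlock_isHermitian (β δ : ℝ) : (sirsInfectedBlock G β δ).IsHermitian :=
  (isHermitian_one.smul (IsSelfAdjoint.all _)).add
    ((G.isHermitian_adjMatrix ℝ).smul (IsSelfAdjoint.all _))

theorem abs_dotProduct_sirsInfectedBlock_mulVec_le (hβ : 0 ≤ β) (hδ : δ ≤ 1) (x : Fin n → ℝ) :
    |x ⬝ᵥ sirsInfectedBlock G β δ *ᵥ x| ≤ (1 - δ + β * lamMax (G.adjMatrix ℝ)) * (x ⬝ᵥ x) := by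
  have hA := abs_dotProduct_mulVec_le_lamMax (G.isHermitian_adjMatrix ℝ)
    (fun i j => by by_cases h : G.Adj i j <;> simp [h]) x
  have hx : 0 ≤ x ⬝ᵥ x := by simpa using dotProduct_star_self_nonneg x
  rw [sirsInfectedBlock, add_mulVec, smul_mulVec, smul_mulVec, one_mulVec, dotProduct_add,
    dotProduct_smul, dotProduct_smul, smul_eq_mul, smul_eq_mul]
  calc _ ≤ |(1 - δ) * (x ⬝ᵥ x)| + |β * (x ⬝ᵥ G.adjMatrix ℝ *ᵥ x)| := abs_add_le _ _
    _ ≤ _ := by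
      rw [abs_mul, abs_mul, abs_of_nonneg (sub_nonneg.2 hδ), abs_of_nonneg hx, abs_of_nonneg hβ]
      nlinarith

theorem tendsto_pow_sirsInfectedBlock (hβ : 0 ≤ β) (hδ : δ ≤ 1)
    (h : β * lamMax (G.adjMatrix ℝ) < δ) :
    Tendsto (sirsInfectedBlock G β δ ^ ·) atTop (𝓝 0) :=
  (sirsInfectedBlock_isHermitian G β δ).tendsto_pow_atTop_nhds_zero fun i =>
    ((sirsInfectedBlock_isHermitian G β δ).abs_eigenvalues_le
      (abs_dotProduct_sirsInfectedBlock_mulVec_le G hβ hδ) i).trans_lt (by linarith)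

theorem sirsL_snd (p : (Fin n → ℝ) × (Fin n → ℝ)) :
    (sirsL G β δ γ p).2 = sirsInfectedBlock G β δ *ᵥ p.2 := by
  ext i
  simp [sirsL, sirsInfectedBlock, add_mulVec, smul_mulVec]

theorem iterate_sirsL_snd (p : (Fin n → ℝ) × (Fin n → ℝ)) (t : ℕ) :
    ((sirsL G β δ γ)^[t] p).2 = sirsInfectedBlock G β δ ^ t *ᵥ p.2 := by
  induction t with
  | zero => simp
  | succ t ih => rw [Function.iterate_succ_apply', sirsL_snd, ih, mulVec_mulVec, pow_succ']

theorem tendsto_iterate_sirsL_snd (hβ : 0 ≤ β) (hδ : δ ≤ 1)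
    (h : β * lamMax (G.adjMatrix ℝ) < δ) (p : (Fin n → ℝ) × (Fin n → ℝ)) :
    Tendsto (fun t => ((sirsL G β δ γ)^[t] p).2) atTop (𝓝 0) := by
  have hcont : Continuous fun M : Matrix (Fin n) (Fin n) ℝ => M *ᵥ p.2 :=
    continuous_id.matrix_mulVec continuous_const
  have hlim := (hcont.tendsto 0).comp (tendsto_pow_sirsInfectedBlock G hβ hδ h)
  rw [zero_mulVec] at hlim
  exact hlim.congr fun t => (iterate_sirsL_snd G p t).symm

theorem mem_sirsD_iff {p : (Fin n → ℝ) × (Fin n → ℝ)} :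
    p ∈ sirsD n ↔ ∀ i, 0 ≤ p.1 i ∧ 0 ≤ p.2 i ∧ p.1 i + p.2 i ≤ 1 := by
  simp only [sirsD, Set.mem_ofPred_eq, Set.mem_Icc, Pi.le_def, Pi.zero_apply, Pi.one_apply]
  constructor
  · rintro ⟨⟨hR, -⟩, ⟨hI, -⟩, hRI⟩ i
    exact ⟨hR i, hI i, hRI i⟩
  · intro hp
    refine ⟨⟨fun i => (hp i).1, fun i => ?_⟩, ⟨fun i => (hp i).2.1, fun i => ?_⟩,
      fun i => (hp i).2.2⟩ <;> linarith [hp i]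

theorem sirsF_mapsTo (hβ : β ∈ Set.Icc 0 1) (hδ : δ ∈ Set.Icc 0 1) (hγ : γ ∈ Set.Icc 0 1) :
    Set.MapsTo (sirsF G β δ γ) (sirsD n) (sirsD n) := by
  intro p hp
  rw [mem_sirsD_iff] at hp ⊢
  intro i
  obtain ⟨hP0, hP1⟩ := prod_one_sub_mem_Icc (G.neighborFinset i)
    fun j _ => unitInterval.mul_mem hβ ⟨(hp j).2.1, by linarith [hp j]⟩
  obtain ⟨hR, hI, hRI⟩ := hp i
  obtain ⟨hβ0, hβ1⟩ := hβ
  obtain ⟨hδ0, hδ1⟩ := hδ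
  obtain ⟨hγ0, hγ1⟩ := hγ
  simp only [sirsF]
  refine ⟨by nlinarith, by nlinarith, by nlinarith⟩

theorem sirsF_snd_le_sirsL_snd (hβ : β ∈ Set.Icc 0 1) {p : (Fin n → ℝ) × (Fin n → ℝ)}
    (hp : p ∈ sirsD n) : (sirsF G β δ γ p).2 ≤ (sirsL G β δ γ p).2 := by
  rw [mem_sirsD_iff] at hp
  intro i
  have hβI : ∀ j ∈ G.neighborFinset i, β * p.2 j ∈ Set.Icc 0 1 :=
    fun j _ => unitInterval.mul_mem hβ ⟨(hp j).2.1, by linarith [hp j]⟩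
  have hW := one_sub_sum_le_prod_one_sub _ hβI
  rw [← mul_sum, ← G.adjMatrix_mulVec_apply] at hW
  have hP1 := (prod_one_sub_mem_Icc _ hβI).2
  obtain ⟨hR, hI, hRI⟩ := hp i
  simp only [sirsF, sirsL]
  nlinarith

theorem sirsL_snd_mono (hβ : 0 ≤ β) (hδ : δ ≤ 1) {p q : (Fin n → ℝ) × (Fin n → ℝ)}
    (h : p.2 ≤ q.2) : (sirsL G β δ γ p).2 ≤ (sirsL G β δ γ q).2 := by
  intro i
  have hA : (G.adjMatrix ℝ *ᵥ p.2) i ≤ (G.adjMatrix ℝ *ᵥ q.2) i := by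
    simp only [G.adjMatrix_mulVec_apply]
    exact sum_le_sum fun j _ => h j
  exact add_le_add (mul_le_mul_of_nonneg_left (h i) (sub_nonneg.2 hδ))
    (mul_le_mul_of_nonneg_left hA hβ)

theorem iterate_sirsF_snd_le (hβ : β ∈ Set.Icc 0 1) (hδ : δ ∈ Set.Icc 0 1)
    (hγ : γ ∈ Set.Icc 0 1) {p : (Fin n → ℝ) × (Fin n → ℝ)} (hp : p ∈ sirsD n) (t : ℕ) :
    ((sirsF G β δ γ)^[t] p).2 ≤ ((sirsL G β δ γ)^[t] p).2 := by
  induction t with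
  | zero => exact le_rfl
  | succ t ih =>
    rw [Function.iterate_succ_apply', Function.iterate_succ_apply']
    exact (sirsF_snd_le_sirsL_snd G hβ ((sirsF_mapsTo G hβ hδ hγ).iterate t hp)).trans
      (sirsL_snd_mono G hβ.1 hδ.2 ih)

theorem tendsto_iterate_sirsF_snd (hβ : β ∈ Set.Icc 0 1) (hδ : δ ∈ Set.Icc 0 1)
    (hγ : γ ∈ Set.Icc 0 1) (h : β * lamMax (G.adjMatrix ℝ) < δ)
    {p : (Fin n → ℝ) × (Fin n → ℝ)} (hp : p ∈ sirsD n) :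
    Tendsto (fun t => ((sirsF G β δ γ)^[t] p).2) atTop (𝓝 0) := by
  have hL := tendsto_pi_nhds.1 (tendsto_iterate_sirsL_snd G (γ := γ) hβ.1 hδ.2 h p)
  refine tendsto_pi_nhds.2 fun i => tendsto_of_tendsto_of_tendsto_of_le_of_le tendsto_const_nhds
    (hL i) (fun t => ?_) fun t => iterate_sirsF_snd_le G hβ hδ hγ hp t i
  exact (mem_sirsD_iff.1 ((sirsF_mapsTo G hβ hδ hγ).iterate t hp) i).2.1

end SIRS

theorem stmt12_general {n : ℕ} (G : SimpleGraph (Fin n)) [DecidableRel G.Adj]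
    (β δ γ : ℝ) (hβ : β ∈ Set.Ioo (0 : ℝ) 1)
    (hδ : δ ∈ Set.Ioo (0 : ℝ) 1) (hγ : γ ∈ Set.Ioo (0 : ℝ) 1)
    (h : β * lamMax (G.adjMatrix ℝ) / δ < 1) :
    sirsF G β δ γ 0 = 0 ∧ sirsL G β δ γ 0 = 0 ∧
    (∀ p ∈ sirsD n,
      Filter.Tendsto (fun t => (sirsF G β δ γ)^[t] p) Filter.atTop (nhds 0)) ∧
    (∀ p : (Fin n → ℝ) × (Fin n → ℝ),
      Filter.Tendsto (fun t => (sirsL G β δ γ)^[t] p) Filter.atTop (nhds 0)) := by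
  have hβδ : β * lamMax (G.adjMatrix ℝ) < δ := (div_lt_one hδ.1).1 h
  have hR : ‖1 - γ‖ < 1 := by
    rw [Real.norm_eq_abs, abs_lt]
    constructor <;> linarith [hγ.1, hγ.2]
  refine ⟨?_, ?_, fun p hp => ?_, fun p => ?_⟩
  · ext i <;> simp [sirsF]
  · ext i <;> simp [sirsL]
  · exact tendsto_iterate_of_fst_eq hR (fun q => rfl) <| tendsto_iterate_sirsF_snd G
      (Set.Ioo_subset_Icc_self hβ) (Set.Ioo_subset_Icc_self hδ) (Set.Ioo_subset_Icc_self hγ) hβδ hp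
  · exact tendsto_iterate_of_fst_eq hR (fun q => rfl) <|
      tendsto_iterate_sirsL_snd G hβ.1.le hδ.2.le hβδ p

/-- If `β λmax(A)/δ < 1` then the origin is a globally stable fixed point of
both the SIRS nonlinear map (on `D`) and the SIRS linear map (on all of `ℝ^{2n}`). -/
theorem stmt12 {n : ℕ} (hn : 1 ≤ n) (G : SimpleGraph (Fin n)) [DecidableRel G.Adj]
    (hG : G.Connected) (β δ γ : ℝ) (hβ : β ∈ Set.Ioo (0 : ℝ) 1)
    (hδ : δ ∈ Set.Ioo (0 : ℝ) 1) (hγ : γ ∈ Set.Ioo (0 : ℝ) 1)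
    (h : β * lamMax (G.adjMatrix ℝ) / δ < 1) :
    sirsF G β δ γ 0 = 0 ∧ sirsL G β δ γ 0 = 0 ∧
    (∀ p ∈ sirsD n,
      Filter.Tendsto (fun t => (sirsF G β δ γ)^[t] p) Filter.atTop (nhds 0)) ∧
    (∀ p : (Fin n → ℝ) × (Fin n → ℝ),
      Filter.Tendsto (fun t => (sirsL G β δ γ)^[t] p) Filter.atTop (nhds 0)) :=
  stmt12_general G β δ γ hβ hδ hγ h
end
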